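/- For every integer n ≥ 2, the RNNI graph on n leaves is connected: any two maximal chains in the partition lattice of {1,...,n} are joined by a finite sequence of chains in which consecutive chains are adjacent (differ in exactly one partition). -/

import Mathlib

/-- A maximal chain in the partition lattice of `Fin n`: a sequence
`P 0 < P 1 < … < P (n-1)` of partitions (modeled as setoids, ordered by refinement),
starting at the discrete partition `⊥`, ending at the trivial partition `⊤`,
each step being a covering step (merging exactly two blocks).
We index by `ℕ` and require the chain to be constantly `⊤` from index `n-1` on. -/
structure RChain (n : ℕ) where
  P : ℕ → Setoid (Fin n)
  first : P 0 = ⊥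
  last : ∀ i, n - 1 ≤ i → P i = ⊤
  step : ∀ i, i < n - 1 → P i ⋖ P (i + 1)

/-- The RNNI graph on `n` leaves: vertices are maximal chains in the partition
lattice of `Fin n`, two chains being adjacent iff they differ in exactly one partition. -/
def RNNI (n : ℕ) : SimpleGraph (RChain n) where
  Adj T R := ∃! i : ℕ, T.P i ≠ R.P i
  symm := by
    constructor
    rintro T R ⟨i, hi, hu⟩
    exact ⟨i, hi.symm, fun j hj => hu j hj.symm⟩
  loopless := by
    constructor
    rintro T ⟨i, hi, -⟩
    exact hi rfl

/-- `C` is a cluster of the chain `T` if it is a block (equivalence class)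
of some partition of the chain. -/
def IsCluster {n : ℕ} (T : RChain n) (C : Set (Fin n)) : Prop :=
  ∃ i, C ∈ (T.P i).classes

/-- A chain is a caterpillar chain if any two of its non-singleton clusters are
comparable under inclusion. -/
def IsCaterpillar {n : ℕ} (T : RChain n) : Prop :=
  ∀ C D : Set (Fin n), IsCluster T C → IsCluster T D →
    ¬ C.Subsingleton → ¬ D.Subsingleton → (C ⊆ D ∨ D ⊆ C)

/-- For a caterpillar chain `T`, `rk T a` is the least index `i` such that the
block of `a` in `P i` is not a singleton (necessarily `i ≥ 1`). -/
noncomputable def rk {n : ℕ} (T : RChain n) (a : Fin n) : ℕ :=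
  sInf {i | ∃ b, b ≠ a ∧ (T.P i).r a b}

/-- A DCT vertex: a maximal chain on the ground set `Fin (m+2)` (representing
`{1, …, m+2}`, with `a_i ↦ i - 1`) having the set `{1, …, n}` and each of the sets
`B_k = {n+1, …, n+1+k}`, `k = 1, …, m+1-n`, as clusters. -/
def IsDCT (n m : ℕ) (X : RChain (m + 2)) : Prop :=
  IsCluster X {x | x.val < n} ∧
  ∀ k, 1 ≤ k → k ≤ m + 1 - n → IsCluster X {x | n ≤ x.val ∧ x.val ≤ n + k}

/-- The subgraph of the RNNI graph induced on the DCT vertices. -/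
def DCTGraph (n m : ℕ) : SimpleGraph {Z : RChain (m + 2) // IsDCT n m Z} :=
  SimpleGraph.comap Subtype.val (RNNI (m + 2))

/-- A caterpillar DCT vertex: a DCT vertex whose non-singleton clusters contained in
`{1, …, n}` are pairwise comparable under inclusion. -/
def IsCatDCT (n m : ℕ) (X : RChain (m + 2)) : Prop :=
  IsDCT n m X ∧
  ∀ C D : Set (Fin (m + 2)), IsCluster X C → IsCluster X D →
    C ⊆ {x | x.val < n} → D ⊆ {x | x.val < n} →
    ¬ C.Subsingleton → ¬ D.Subsingleton → (C ⊆ D ∨ D ⊆ C)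

/-!
The partition lattice is upper semimodular: if `x ⋖ a` and `x ⋖ b` with `a ≠ b`, then `a` and `b`
are both covered by `a ⊔ b`. So if two maximal chains agree up to level `k` and differ at level
`k + 1`, both can be rerouted through `a ⊔ b` at level `k + 2` and continued along a common tail
to `⊤`; the two rerouted chains are adjacent, and each agrees with its original chain one level
further, so induction on the number of disagreeing levels connects any two chains. Tails of the
right length exist because a cover merges exactly two classes, so every cover chain from a
partition with `m` classes reaches `⊤` in `m - 1` steps.
-/

namespace Setoid

variable {α : Type*} {r s : Setoid α} {u v : α}

def merge (r : Setoid α) (u v : α) : Setoid α where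
  r a b := r a b ∨ (r a u ∧ r b v) ∨ (r a v ∧ r b u)
  iseqv :=
    { refl := fun a => Or.inl (r.refl' a)
      symm := fun _ => by have := @r.symm'; tauto
      trans := fun _ _ => by have := @r.symm'; have := @r.trans'; grind }

theorem le_merge (r : Setoid α) (u v : α) : r ≤ r.merge u v :=
  fun _ _ h => Or.inl h

theorem merge_rel (r : Setoid α) (u v : α) : r.merge u v u v :=
  Or.inr (Or.inl ⟨r.refl' u, r.refl' v⟩)

theorem merge_le (hrs : r ≤ s) (huv : s u v) : r.merge u v ≤ s := by
  rintro a b (h | ⟨hau, hbv⟩ | ⟨hav, hbu⟩)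
  · exact hrs h
  · exact s.trans' (hrs hau) (s.trans' huv (s.symm' (hrs hbv)))
  · exact s.trans' (hrs hav) (s.trans' (s.symm' huv) (s.symm' (hrs hbu)))

theorem merge_eq_sup (hrs : r ≤ s) : s.merge u v = s ⊔ r.merge u v :=
  le_antisymm (merge_le le_sup_left (le_sup_right (a := s) (merge_rel r u v)))
    (sup_le (le_merge s u v) (merge_le (hrs.trans (le_merge s u v)) (merge_rel s u v)))

theorem covBy_merge (h : ¬ r u v) : r ⋖ r.merge u v := by
  refine ⟨lt_of_le_of_ne (le_merge r u v) fun he => h ?_, fun t hrt htm => ?_⟩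
  · exact he ▸ merge_rel r u v
  obtain ⟨a, b, hab, hrab⟩ : ∃ a b, t a b ∧ ¬ r a b := by
    simpa [le_def] using hrt.not_ge
  have htuv : t u v := by
    rcases htm.le hab with h' | ⟨hau, hbv⟩ | ⟨hav, hbu⟩
    · exact absurd h' hrab
    · exact t.trans' (hrt.le (r.symm' hau)) (t.trans' hab (hrt.le hbv))
    · exact t.trans' (hrt.le (r.symm' hbu)) (t.trans' (t.symm' hab) (hrt.le hav))
  exact htm.not_ge (merge_le hrt.le htuv)

theorem exists_eq_merge_of_covBy (h : r ⋖ s) : ∃ u v, ¬ r u v ∧ s = r.merge u v := by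
  obtain ⟨u, v, hsuv, hruv⟩ : ∃ u v, s u v ∧ ¬ r u v := by
    simpa [le_def] using h.lt.not_ge
  refine ⟨u, v, hruv, ((h.eq_or_eq (le_merge r u v) (merge_le h.le hsuv)).resolve_left ?_).symm⟩
  exact (covBy_merge hruv).ne'

instance : IsUpperModularLattice (Setoid α) where
  covBy_sup_of_inf_covBy {r s} h := by
    obtain ⟨u, v, huv, hr⟩ := exists_eq_merge_of_covBy h
    have hsuv : ¬ s u v := fun hs => huv ⟨hr ▸ merge_rel _ u v, hs⟩
    rw [sup_comm, hr, ← merge_eq_sup inf_le_right]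
    exact covBy_merge hsuv

theorem card_quotient_merge [Finite α] (h : ¬ r u v) :
    Nat.card (Quotient r) = Nat.card (Quotient (r.merge u v)) + 1 := by
  classical
  let π : {q : Quotient r // q ≠ ⟦v⟧} → Quotient (r.merge u v) :=
    fun q => Quotient.map' id (le_merge r u v) q.1
  have hπ : Function.Bijective π := by
    constructor
    · rintro ⟨⟨a⟩, ha⟩ ⟨⟨b⟩, hb⟩ hab
      replace ha : ¬ r a v := fun h' => ha (Quotient.sound h')
      replace hb : ¬ r b v := fun h' => hb (Quotient.sound h')
      rcases Quotient.exact hab with hab | ⟨-, hbv⟩ | ⟨hav, -⟩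
      · exact Subtype.ext (Quotient.sound hab)
      · exact absurd hbv hb
      · exact absurd hav ha
    · rintro ⟨a⟩
      by_cases hav : r a v
      · exact ⟨⟨⟦u⟧, fun h' => h (Quotient.exact h')⟩,
          Quotient.sound (Or.inr (Or.inl ⟨r.refl' u, hav⟩))⟩
      · exact ⟨⟨⟦a⟧, fun h' => hav (Quotient.exact h')⟩, rfl⟩
  rw [← Nat.card_eq_of_bijective π hπ, ← Finite.card_option,
    Nat.card_congr (Equiv.optionSubtypeNe ⟦v⟧)]

theorem card_quotient_of_covBy [Finite α] (h : r ⋖ s) :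
    Nat.card (Quotient r) = Nat.card (Quotient s) + 1 := by
  obtain ⟨u, v, huv, rfl⟩ := exists_eq_merge_of_covBy h
  exact card_quotient_merge huv

theorem card_quotient_bot : Nat.card (Quotient (⊥ : Setoid α)) = Nat.card α :=
  (Nat.card_eq_of_bijective _ ⟨fun _ _ h => Quotient.exact h, Quotient.mk_surjective⟩).symm

theorem card_quotient_le_one_iff [Finite α] : Nat.card (Quotient r) ≤ 1 ↔ r = ⊤ :=
  Finite.card_le_one_iff_subsingleton.trans Quotient.subsingleton_iff

theorem exists_covBy_chain_to_top [Finite α] (z : Setoid α) :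
    ∃ c : ℕ → Setoid α, c 0 = z ∧ (∀ i, i + 1 < Nat.card (Quotient z) → c i ⋖ c (i + 1)) ∧
      ∀ i, Nat.card (Quotient z) ≤ i + 1 → c i = ⊤ := by
  by_cases hz : Nat.card (Quotient z) ≤ 1
  · exact ⟨fun _ => z, rfl, fun i hi => by omega, fun _ _ => card_quotient_le_one_iff.1 hz⟩
  obtain ⟨u, v, huv⟩ : ∃ u v, ¬ z u v := by
    simpa [eq_top_iff] using mt card_quotient_le_one_iff.2 hz
  have hcard := card_quotient_merge huv
  obtain ⟨c, hc0, hcov, htop⟩ := exists_covBy_chain_to_top (z.merge u v)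
  refine ⟨fun i => Nat.casesOn i z c, rfl, ?_, ?_⟩
  · rintro (_ | i) hi
    · show z ⋖ c 0
      exact hc0 ▸ covBy_merge huv
    · exact hcov i (by omega)
  · rintro (_ | i) hi
    · omega
    · exact htop i (by omega)
termination_by Nat.card (Quotient z)
decreasing_by omega

end Setoid

theorem covBy_sup_of_covBy_of_covBy {α : Type*} [Lattice α] [IsWeakUpperModularLattice α]
    {x a b : α} (ha : x ⋖ a) (hb : x ⋖ b) (hab : a ≠ b) : a ⋖ a ⊔ b := by
  have hx : a ⊓ b = x := WCovBy.sup_eq (α := αᵒᵈ) ha.wcovBy.toDual hb.wcovBy.toDual hab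
  subst hx
  exact covBy_sup_of_inf_covBy_of_inf_covBy_left ha hb

namespace RChain

variable {n : ℕ}

theorem ext {T R : RChain n} (h : T.P = R.P) : T = R := by
  cases T; cases R; cases h; rfl

theorem card_quotient_P (T : RChain n) {i : ℕ} (hi : i ≤ n - 1) :
    Nat.card (Quotient (T.P i)) = n - i := by
  induction i with
  | zero => rw [T.first, Setoid.card_quotient_bot, Nat.card_fin]; rfl
  | succ i ih =>
    have := Setoid.card_quotient_of_covBy (T.step i (by omega))
    have := ih (by omega)
    omega

theorem card_quotient_of_P_covBy (T : RChain n) {m : ℕ} {z : Setoid (Fin n)} (hz : T.P m ⋖ z) :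
    m < n - 1 ∧ Nat.card (Quotient z) = n - (m + 1) := by
  have hm : m < n - 1 := by
    by_contra hm
    exact not_top_lt (T.last m (by omega) ▸ hz.lt)
  have := Setoid.card_quotient_of_covBy hz
  have := T.card_quotient_P hm.le
  exact ⟨hm, by omega⟩

noncomputable def splice (T : RChain n) (m : ℕ) (z : Setoid (Fin n)) (hz : T.P m ⋖ z) :
    RChain n where
  P j := if j ≤ m then T.P j else (Setoid.exists_covBy_chain_to_top z).choose (j - (m + 1))
  first := by simp [T.first]
  last i hi := by
    obtain ⟨-, -, htop⟩ := (Setoid.exists_covBy_chain_to_top z).choose_spec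
    obtain ⟨hm, hcard⟩ := T.card_quotient_of_P_covBy hz
    rw [if_neg (by omega)]
    exact htop _ (by omega)
  step i hi := by
    obtain ⟨h0, hcov, -⟩ := (Setoid.exists_covBy_chain_to_top z).choose_spec
    obtain ⟨hm, hcard⟩ := T.card_quotient_of_P_covBy hz
    rcases lt_trichotomy i m with h | rfl | h
    · rw [if_pos h.le, if_pos (show i + 1 ≤ m from h)]
      exact T.step i hi
    · rw [if_pos le_rfl, if_neg (by omega), Nat.sub_self, h0]
      exact hz
    · rw [if_neg (by omega), if_neg (by omega), show i + 1 - (m + 1) = i - (m + 1) + 1 by omega]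
      exact hcov _ (by omega)

theorem splice_P_of_le (T : RChain n) {m : ℕ} {z : Setoid (Fin n)} (hz : T.P m ⋖ z) {j : ℕ}
    (hj : j ≤ m) : (T.splice m z hz).P j = T.P j :=
  if_pos hj

theorem splice_P_eq_splice_P (T R : RChain n) {m : ℕ} {z : Setoid (Fin n)} (hT : T.P m ⋖ z)
    (hR : R.P m ⋖ z) {j : ℕ} (hj : m < j) : (T.splice m z hT).P j = (R.splice m z hR).P j := by
  simp only [splice, if_neg hj.not_ge]

theorem rnni_adj_splice {T R : RChain n} {k : ℕ} (hagree : ∀ j ≤ k, T.P j = R.P j)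
    {z : Setoid (Fin n)} (hT : T.P (k + 1) ⋖ z) (hR : R.P (k + 1) ⋖ z)
    (hne : T.P (k + 1) ≠ R.P (k + 1)) :
    (RNNI n).Adj (T.splice (k + 1) z hT) (R.splice (k + 1) z hR) := by
  refine ⟨k + 1, ?_, fun j hj => ?_⟩
  · beta_reduce
    rwa [splice_P_of_le _ _ le_rfl, splice_P_of_le _ _ le_rfl]
  beta_reduce at hj
  by_contra hjk
  rcases Nat.lt_or_gt_of_ne hjk with hj' | hj'
  · rw [splice_P_of_le _ _ hj'.le, splice_P_of_le _ _ hj'.le, hagree j (by omega)] at hj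
    exact hj rfl
  · exact hj (splice_P_eq_splice_P T R hT hR hj')

theorem rnni_reachable_of_P_eq (d k : ℕ) (hk : n - 1 ≤ k + d) (T R : RChain n)
    (hagree : ∀ j ≤ k, T.P j = R.P j) : (RNNI n).Reachable T R := by
  induction d generalizing k T R with
  | zero =>
    obtain rfl : T = R := RChain.ext <| funext fun j => by
      rcases le_or_gt j k with hj | hj
      · exact hagree j hj
      · rw [T.last j (by omega), R.last j (by omega)]
    rfl
  | succ d ih =>
    by_cases hne : T.P (k + 1) = R.P (k + 1)
    · exact ih (k + 1) (by omega) T R fun j hj =>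
        (Nat.le_succ_iff.1 hj).elim (hagree j) fun h => h ▸ hne
    have hk : k < n - 1 := by
      by_contra hk
      exact hne (by rw [T.last _ (by omega), R.last _ (by omega)])
    have hTk : T.P k ⋖ T.P (k + 1) := T.step k hk
    have hRk : T.P k ⋖ R.P (k + 1) := hagree k le_rfl ▸ R.step k hk
    have hT := covBy_sup_of_covBy_of_covBy hTk hRk hne
    have hR := sup_comm (T.P (k + 1)) _ ▸ covBy_sup_of_covBy_of_covBy hRk hTk (Ne.symm hne)
    have hTT' := ih (k + 1) (by omega) T (T.splice (k + 1) _ hT) fun j hj =>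
      (splice_P_of_le T hT hj).symm
    have hR'R := ih (k + 1) (by omega) (R.splice (k + 1) _ hR) R fun j hj =>
      splice_P_of_le R hR hj
    exact hTT'.trans ((rnni_adj_splice hagree hT hR hne).reachable.trans hR'R)

instance : Nonempty (RChain n) := by
  obtain ⟨c, hc0, hcov, htop⟩ := Setoid.exists_covBy_chain_to_top (⊥ : Setoid (Fin n))
  rw [Setoid.card_quotient_bot, Nat.card_fin] at hcov htop
  exact ⟨⟨c, hc0, fun i hi => htop i (by omega), fun i hi => hcov i (by omega)⟩⟩

end RChain

theorem rnni_connected_general (n : ℕ) : (RNNI n).Connected :=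
  ⟨fun T R => RChain.rnni_reachable_of_P_eq (n - 1) 0 (by omega) T R fun j hj => by
    rw [Nat.le_zero.1 hj, T.first, R.first]⟩

/-- The RNNI graph on `n` leaves is connected. -/
theorem rnni_connected (n : ℕ) (hn : 2 ≤ n) : (RNNI n).Connected :=
  rnni_connected_general n
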